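/- arXiv:2602.00944 — 2 statements merged into one kernel-verified Lean document; each statement's English description precedes it below -/
import Mathlib

section
/- If a monic polynomial f over the integers has a factorization over the rationals with a factor of degree d, then for every prime p not dividing the discriminant of f (so that f mod p is squarefree), there is a subset of the irreducible factors of f mod p whose degrees sum to d. -/
/-- The subset-sum set of degrees of the irreducible factors of `f` mod `p`:
all natural numbers arising as the sum of the degrees of a sub(multi)set of
the irreducible factors of the reduction of `f` modulo `p`. -/
noncomputable def Sset (p : ℕ) (f : Polynomial ℤ) : Set ℕ :=
  if hp : p.Prime then
    haveI : Fact p.Prime := ⟨hp⟩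
    {d | ∃ s : Multiset (Polynomial (ZMod p)),
      s ≤ UniqueFactorizationMonoid.factors (f.map (Int.castRingHom (ZMod p))) ∧
      (s.map Polynomial.natDegree).sum = d}
  else ∅
/-- The Sylvester matrix of `P` (regarded as of degree `m`) and `Q` (regarded as of
degree `n`): the first `n` rows carry the coefficients of `P`, the last `m` rows those
of `Q`. -/
noncomputable def sylvester {R : Type*} [CommRing R] (m n : ℕ) (P Q : Polynomial R) :
    Matrix (Fin (m + n)) (Fin (m + n)) R :=
  Matrix.of fun i j =>
    if (i : ℕ) < n then
      if (i : ℕ) ≤ (j : ℕ) ∧ (j : ℕ) ≤ (i : ℕ) + m then P.coeff (m + i - j) else 0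
    else
      if (i : ℕ) - n ≤ (j : ℕ) ∧ (j : ℕ) ≤ ((i : ℕ) - n) + n then
        Q.coeff (n + ((i : ℕ) - n) - j) else 0

/-- The resultant of two polynomials, as the determinant of their Sylvester matrix. -/
noncomputable def resultant {R : Type*} [CommRing R] (P Q : Polynomial R) : R :=
  (sylvester P.natDegree Q.natDegree P Q).det

lemma exists_le_of_le_map {α β : Type*} [DecidableEq β] {f : α → β} (u : Multiset α) :
    ∀ t : Multiset β, t ≤ u.map f → ∃ s ≤ u, s.map f = t := by
  induction u using Multiset.induction_on with
  | empty =>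
    intro t ht
    simp only [Multiset.map_zero, Multiset.le_zero] at ht
    exact ⟨0, le_rfl, by simp [ht]⟩
  | cons a u ih =>
    intro t ht
    rw [Multiset.map_cons] at ht
    by_cases hmem : f a ∈ t
    · have h1 : t.erase (f a) ≤ u.map f := by
        rw [Multiset.erase_le_iff_le_cons]; exact ht
      obtain ⟨s, hs, hmap⟩ := ih _ h1
      refine ⟨a ::ₘ s, Multiset.cons_le_cons _ hs, ?_⟩
      rw [Multiset.map_cons, hmap, Multiset.cons_erase hmem]
    · have h1 : t ≤ u.map f := (Multiset.le_cons_of_notMem hmem).mp ht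
      obtain ⟨s, hs, hmap⟩ := ih _ h1
      exact ⟨s, hs.trans (Multiset.le_cons_self _ _), hmap⟩

theorem degree_of_rational_factor_mem_subsetSums
    (f : Polynomial ℤ) (hf : f.Monic) (g : Polynomial ℚ) (d : ℕ)
    (hg : g ∣ f.map (Int.castRingHom ℚ)) (hd : g.natDegree = d)
    (p : ℕ) (hp : p.Prime)
    (hdisc : ¬ ((p : ℤ) ∣ resultant f (Polynomial.derivative f))) :
    d ∈ Sset p f := by
  classical
  haveI : Fact p.Prime := ⟨hp⟩
  have halg : algebraMap ℤ ℚ = Int.castRingHom ℚ := rfl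
  have hfQ : (f.map (Int.castRingHom ℚ)).Monic := hf.map _
  have hg0 : g ≠ 0 := by
    rintro rfl
    exact hfQ.ne_zero (zero_dvd_iff.mp hg)
  -- Gauss: find a monic integer polynomial g₀ with map g₀ associated to g
  obtain ⟨g₀, hg₀⟩ := IsIntegrallyClosed.eq_map_mul_C_of_dvd (K := ℚ) hf (halg ▸ hg)
  have hlc : g.leadingCoeff ≠ 0 := Polynomial.leadingCoeff_ne_zero.mpr hg0
  have hinj : Function.Injective (Int.castRingHom ℚ) := Int.cast_injective
  have heq : g₀.map (Int.castRingHom ℚ) = g * Polynomial.C g.leadingCoeff⁻¹ := by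
    rw [halg] at hg₀
    have h2 := congrArg (· * Polynomial.C g.leadingCoeff⁻¹) hg₀
    simpa [mul_assoc, ← Polynomial.C_mul, mul_inv_cancel₀ hlc] using h2
  have hassoc : Associated (g₀.map (Int.castRingHom ℚ)) g := by
    rw [heq]
    exact (associated_mul_isUnit_left_iff
      (Polynomial.isUnit_C.mpr (inv_ne_zero hlc).isUnit)).mpr (Associated.refl _)
  have hg₀monic : g₀.Monic :=
    Polynomial.monic_of_injective hinj
      (heq ▸ Polynomial.monic_mul_leadingCoeff_inv hg0)
  have hmapdvd : g₀.map (Int.castRingHom ℚ) ∣ f.map (Int.castRingHom ℚ) :=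
    hassoc.dvd_iff_dvd_left.mpr hg
  have hdvd : g₀ ∣ f := by
    apply Polynomial.Monic.dvd_of_fraction_map_dvd_fraction_map (K := ℚ) hf hg₀monic
    rwa [halg]
  have hdeg : g₀.natDegree = d := by
    have h1 : (g₀.map (Int.castRingHom ℚ)).natDegree = g₀.natDegree :=
      Polynomial.natDegree_map_eq_of_injective hinj _
    have h2 : (g₀.map (Int.castRingHom ℚ)).degree = g.degree :=
      Polynomial.degree_eq_degree_of_associated hassoc
    rw [← hd, ← h1]
    exact Polynomial.natDegree_eq_of_degree_eq h2
  -- Reduce mod p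
  set φ := Int.castRingHom (ZMod p)
  set fbar := f.map φ with hfbar
  set gbar := g₀.map φ with hgbar
  have hfbarm : fbar.Monic := hf.map _
  have hgbarm : gbar.Monic := hg₀monic.map _
  have hfbar0 : fbar ≠ 0 := hfbarm.ne_zero
  have hgbar0 : gbar ≠ 0 := hgbarm.ne_zero
  have hdvdbar : gbar ∣ fbar := Polynomial.map_dvd φ hdvd
  have hgbardeg : gbar.natDegree = d := by rw [hgbar, hg₀monic.natDegree_map, hdeg]
  have hnf : UniqueFactorizationMonoid.normalizedFactors gbar ≤
      UniqueFactorizationMonoid.normalizedFactors fbar :=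
    (UniqueFactorizationMonoid.dvd_iff_normalizedFactors_le_normalizedFactors hgbar0
      hfbar0).mp hdvdbar
  have hnfdef : UniqueFactorizationMonoid.normalizedFactors fbar =
      Multiset.map normalize (UniqueFactorizationMonoid.factors fbar) := rfl
  rw [hnfdef] at hnf
  obtain ⟨s, hs, hsmap⟩ := exists_le_of_le_map _ _ hnf
  have hsum : (s.map Polynomial.natDegree).sum = d := by
    have hdegnorm : ∀ q : Polynomial (ZMod p),
        (normalize q).natDegree = q.natDegree := by
      intro q
      by_cases hq : q = 0
      · simp [hq]
      · exact Polynomial.natDegree_eq_of_degree_eq (Polynomial.degree_normalize)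
    have h1 : s.map Polynomial.natDegree =
        (UniqueFactorizationMonoid.normalizedFactors gbar).map Polynomial.natDegree := by
      rw [← hsmap, Multiset.map_map]
      simp only [Function.comp]
      exact Multiset.map_congr rfl fun q _ => (hdegnorm q).symm
    rw [h1]
    have h0notmem : (0 : Polynomial (ZMod p)) ∉
        UniqueFactorizationMonoid.normalizedFactors gbar := fun h =>
      (UniqueFactorizationMonoid.prime_of_normalized_factor 0 h).ne_zero rfl
    rw [← Polynomial.natDegree_multiset_prod _ h0notmem]
    have hprod : Associated (UniqueFactorizationMonoid.normalizedFactors gbar).prod gbar :=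
      UniqueFactorizationMonoid.prod_normalizedFactors hgbar0
    rw [Polynomial.natDegree_eq_of_degree_eq
      (Polynomial.degree_eq_degree_of_associated hprod), hgbardeg]
  rw [Sset, dif_pos hp]
  exact ⟨s, hs, hsum⟩
end

section
/- Let f ∈ ℤ[X] be monic of degree n, and let p be a prime with f mod p squarefree. If f factors over ℚ into monic irreducibles f = g·h, then S_p(g) + S_p(h) ⊆ S_p(f) and deg g ∈ S_p(f), where S_p(·) denotes the subset-sum set of modular factor degrees. -/
open Polynomial in
lemma natDegree_eq_of_assoc {K : Type*} [Field K] {a b : K[X]} (hab : Associated a b) :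
    a.natDegree = b.natDegree := by
  obtain ⟨u, rfl⟩ := hab
  rcases eq_or_ne a 0 with rfl | ha
  · simp
  · rw [Polynomial.natDegree_mul ha (Units.ne_zero u),
      Polynomial.natDegree_eq_zero_of_isUnit u.isUnit, add_zero]

open Polynomial in
lemma sum_natDegree_eq_of_rel {K : Type*} [Field K] {s t : Multiset K[X]}
    (h : Multiset.Rel Associated s t) :
    (s.map Polynomial.natDegree).sum = (t.map Polynomial.natDegree).sum := by
  induction h with
  | zero => rfl
  | cons hab _ ih => simp [natDegree_eq_of_assoc hab, ih]

theorem subsetSums_sumset_subset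
    (f : Polynomial ℤ) (hf : f.Monic) (p : ℕ) (hp : p.Prime)
    (hsq : Squarefree (f.map (Int.castRingHom (ZMod p))))
    (g h : Polynomial ℤ) (hgm : g.Monic) (hhm : h.Monic)
    (hirrg : Irreducible (g.map (Int.castRingHom ℚ)))
    (hirrh : Irreducible (h.map (Int.castRingHom ℚ)))
    (hfactor : f = g * h) :
    Set.image2 (· + ·) (Sset p g) (Sset p h) ⊆ Sset p f ∧
      g.natDegree ∈ Sset p f := by
  haveI : Fact p.Prime := ⟨hp⟩
  set φ := Int.castRingHom (ZMod p)
  have hG : (g.map φ) ≠ 0 := (hgm.map φ).ne_zero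
  have hH : (h.map φ) ≠ 0 := (hhm.map φ).ne_zero
  have hmul : f.map φ = g.map φ * h.map φ := by rw [hfactor, Polynomial.map_mul]
  have hrel := UniqueFactorizationMonoid.factors_mul hG hH
  rw [← hmul] at hrel
  -- key: any submultiset of factors g + factors h has an associated submultiset of factors f
  have key : ∀ u : Multiset (Polynomial (ZMod p)),
      u ≤ UniqueFactorizationMonoid.factors (g.map φ) +
          UniqueFactorizationMonoid.factors (h.map φ) →
      ∃ v, v ≤ UniqueFactorizationMonoid.factors (f.map φ) ∧
        (v.map Polynomial.natDegree).sum = (u.map Polynomial.natDegree).sum := by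
    intro u hu
    obtain ⟨w, hw⟩ := Multiset.le_iff_exists_add.mp hu
    rw [hw] at hrel
    obtain ⟨v, w', hv, _, hsplit⟩ := Multiset.rel_add_right.mp hrel
    refine ⟨v, ?_, sum_natDegree_eq_of_rel hv⟩
    rw [hsplit]; exact Multiset.le_add_right v w'
  constructor
  · rintro d ⟨a, ha, b, hb, rfl⟩
    simp only [Sset, dif_pos hp, Set.mem_setOf_eq] at ha hb ⊢
    obtain ⟨s, hs, rfl⟩ := ha
    obtain ⟨t, ht, rfl⟩ := hb
    obtain ⟨v, hv, hveq⟩ := key (s + t) (add_le_add hs ht)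
    exact ⟨v, hv, by simpa using hveq⟩
  · simp only [Sset, dif_pos hp, Set.mem_setOf_eq]
    obtain ⟨v, hv, hveq⟩ := key (UniqueFactorizationMonoid.factors (g.map φ))
      (Multiset.le_add_right _ _)
    refine ⟨v, hv, ?_⟩
    rw [hveq]
    have hprod := UniqueFactorizationMonoid.factors_prod hG
    have hzero : (0 : Polynomial (ZMod p)) ∉ UniqueFactorizationMonoid.factors (g.map φ) :=
      fun h0 => (UniqueFactorizationMonoid.irreducible_of_factor _ h0).ne_zero rfl
    calc ((UniqueFactorizationMonoid.factors (g.map φ)).map Polynomial.natDegree).sum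
        = (UniqueFactorizationMonoid.factors (g.map φ)).prod.natDegree :=
          (Polynomial.natDegree_multiset_prod _ hzero).symm
      _ = (g.map φ).natDegree := natDegree_eq_of_assoc hprod
      _ = g.natDegree := hgm.natDegree_map φ
end
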